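/- arXiv:2510.22462 — 6 statements merged into one kernel-verified Lean document; each statement's English description precedes it below -/
import Mathlib

section
/- Performance Difference Lemma: in a finite discounted MDP, for any two stationary policies π and π' and any start state s₀ ∈ S, V^π(s₀) − V^{π'}(s₀) = (1/(1−γ)) Σ_{s∈S} d^π_{s₀}(s) Σ_{a∈A} π(a|s) A^{π'}(s,a), where A^{π'}(s,a) = Q^{π'}(s,a) − V^{π'}(s) is the advantage of π'. -/
/-!
Write `D = V^π − V'`. Since `V^π` is a fixed point of `T^π` and `T^π V^π − T^π V' = γ P^π D`,
the `π`-average of the advantage of `V'` at `s` is `D s − γ (P^π D) s`. Pairing with the state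
distribution `μ_t` turns `P^π` into the step `μ_t ↦ μ_{t+1}`, so the discounted series
`Σ_t γ^t ⟨μ_t, D − γ P^π D⟩` telescopes to `⟨μ_0, D⟩ = D s₀`; it converges because every `μ_t`
is a probability distribution and `0 ≤ γ < 1`.
-/

/-- The Bellman operator of a stationary policy `π` in a finite discounted MDP. -/
def Tpol {S A : Type*} [Fintype S] [Fintype A]
    (P : S → A → S → ℝ) (r : S → A → ℝ) (γ : ℝ) (π : S → A → ℝ)
    (V : S → ℝ) : S → ℝ :=
  fun s => ∑ a, π s a * (r s a + γ * ∑ s', P s a s' * V s')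

/-- State distribution after `t` steps of policy `π` started from `s₀`:
`μ_0` is the point mass at `s₀` and `μ_{t+1}(s') = Σ_{s,a} μ_t(s) π(a|s) P(s'|s,a)`. -/
def muSeq {S A : Type*} [Fintype S] [Fintype A] [DecidableEq S]
    (P : S → A → S → ℝ) (π : S → A → ℝ) (s₀ : S) : ℕ → S → ℝ
  | 0 => fun s => if s = s₀ then 1 else 0
  | t + 1 => fun s' => ∑ s, ∑ a, muSeq P π s₀ t s * π s a * P s a s'

/-- The discounted occupancy measure `d^π_{s₀}(s) = (1−γ) Σ_{t≥0} γ^t μ^π_t(s)`. -/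
noncomputable def occ {S A : Type*} [Fintype S] [Fintype A] [DecidableEq S]
    (P : S → A → S → ℝ) (π : S → A → ℝ) (γ : ℝ) (s₀ : S) : S → ℝ :=
  fun s => (1 - γ) * ∑' t : ℕ, γ ^ t * muSeq P π s₀ t s

open Finset

theorem hasSum_sub_succ {G : Type*} [AddCommGroup G] [TopologicalSpace G]
    [IsTopologicalAddGroup G] {f : ℕ → G} (hf : Summable f) :
    HasSum (fun n => f n - f (n + 1)) (f 0) := by
  have hsucc : HasSum (fun n => f (n + 1)) (∑' n, f (n + 1)) :=
    ((summable_nat_add_iff 1).2 hf).hasSum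
  simpa using hsucc.zero_add.sub hsucc

section Bellman

variable {S A : Type*} [Fintype S] [Fintype A]
  {P : S → A → S → ℝ} {r : S → A → ℝ} {γ : ℝ} {π : S → A → ℝ}

theorem Tpol_sub_Tpol (V W : S → ℝ) (s : S) :
    Tpol P r γ π V s - Tpol P r γ π W s
      = γ * ∑ a, π s a * ∑ s', P s a s' * (V s' - W s') := by
  simp only [Tpol, ← sum_sub_distrib]
  rw [mul_sum]
  refine sum_congr rfl fun a _ => ?_
  simp only [mul_sub, sum_sub_distrib]
  ring

theorem sum_mul_advantage_eq_Tpol_sub (hπ1 : ∀ s, ∑ a, π s a = 1) (V : S → ℝ) (s : S) :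
    ∑ a, π s a * ((r s a + γ * ∑ s', P s a s' * V s') - V s) = Tpol P r γ π V s - V s := by
  simp only [Tpol, mul_sub, sum_sub_distrib, ← sum_mul, hπ1 s, one_mul]

end Bellman

section Occupancy

variable {S A : Type*} [Fintype S] [Fintype A] [DecidableEq S]
  {P : S → A → S → ℝ} {π : S → A → ℝ} {s₀ : S}

theorem sum_muSeq_zero_mul (h : S → ℝ) : ∑ s, muSeq P π s₀ 0 s * h s = h s₀ := by
  simp [muSeq]

theorem sum_muSeq_succ_mul (t : ℕ) (h : S → ℝ) :
    ∑ s', muSeq P π s₀ (t + 1) s' * h s'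
      = ∑ s, muSeq P π s₀ t s * ∑ a, π s a * ∑ s', P s a s' * h s' := by
  simp only [muSeq, sum_mul, mul_sum]
  rw [sum_comm]
  refine sum_congr rfl fun s _ => ?_
  rw [sum_comm]
  exact sum_congr rfl fun a _ => sum_congr rfl fun s' _ => by ring

theorem muSeq_nonneg (hP0 : ∀ s a s', 0 ≤ P s a s') (hπ0 : ∀ s a, 0 ≤ π s a) (t : ℕ) (s : S) :
    0 ≤ muSeq P π s₀ t s := by
  induction t generalizing s with
  | zero => simp only [muSeq]; split <;> norm_num
  | succ t ih =>
    exact sum_nonneg fun s _ => sum_nonneg fun a _ =>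
      mul_nonneg (mul_nonneg (ih s) (hπ0 s a)) (hP0 s a _)

theorem sum_muSeq (hP1 : ∀ s a, ∑ s', P s a s' = 1) (hπ1 : ∀ s, ∑ a, π s a = 1) (t : ℕ) :
    ∑ s, muSeq P π s₀ t s = 1 := by
  induction t with
  | zero => simp [muSeq]
  | succ t ih =>
    simpa [hP1, hπ1, ih] using sum_muSeq_succ_mul (P := P) (π := π) (s₀ := s₀) t 1

variable (hP0 : ∀ s a s', 0 ≤ P s a s') (hP1 : ∀ s a, ∑ s', P s a s' = 1)
  (hπ0 : ∀ s a, 0 ≤ π s a) (hπ1 : ∀ s, ∑ a, π s a = 1)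
include hP0 hP1 hπ0 hπ1

theorem muSeq_le_one (t : ℕ) (s : S) : muSeq P π s₀ t s ≤ 1 :=
  sum_muSeq hP1 hπ1 t ▸
    single_le_sum (fun s' _ => muSeq_nonneg hP0 hπ0 t s') (mem_univ s)

theorem summable_pow_mul_muSeq {γ : ℝ} (hγ0 : 0 ≤ γ) (hγ1 : γ < 1) (s : S) :
    Summable fun t => γ ^ t * muSeq P π s₀ t s := by
  refine (summable_geometric_of_lt_one hγ0 hγ1).of_nonneg_of_le
    (fun t => mul_nonneg (pow_nonneg hγ0 t) (muSeq_nonneg hP0 hπ0 t s)) fun t => ?_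
  exact mul_le_of_le_one_right (pow_nonneg hγ0 t) (muSeq_le_one hP0 hP1 hπ0 hπ1 t s)

theorem summable_pow_mul_sum_muSeq_mul {γ : ℝ} (hγ0 : 0 ≤ γ) (hγ1 : γ < 1) (h : S → ℝ) :
    Summable fun t => γ ^ t * ∑ s, muSeq P π s₀ t s * h s := by
  simp only [mul_sum, ← mul_assoc]
  exact summable_sum fun s _ =>
    (summable_pow_mul_muSeq hP0 hP1 hπ0 hπ1 hγ0 hγ1 s).mul_right (h s)

theorem sum_occ_mul {γ : ℝ} (hγ0 : 0 ≤ γ) (hγ1 : γ < 1) (h : S → ℝ) :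
    ∑ s, occ P π γ s₀ s * h s = (1 - γ) * ∑' t, γ ^ t * ∑ s, muSeq P π s₀ t s * h s := by
  simp only [occ, mul_assoc, ← mul_sum, ← tsum_mul_right]
  congr 1
  simp only [mul_sum, ← mul_assoc]
  exact (Summable.tsum_finsetSum fun s _ =>
    (summable_pow_mul_muSeq hP0 hP1 hπ0 hπ1 hγ0 hγ1 s).mul_right (h s)).symm

end Occupancy

theorem stmt9_general {S A : Type*} [Fintype S] [Fintype A]
    [DecidableEq S]
    (P : S → A → S → ℝ) (hP0 : ∀ s a s', 0 ≤ P s a s')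
    (hP1 : ∀ s a, ∑ s', P s a s' = 1)
    (r : S → A → ℝ) (γ : ℝ) (hγ0 : 0 ≤ γ) (hγ1 : γ < 1)
    (π : S → A → ℝ) (hπ0 : ∀ s a, 0 ≤ π s a) (hπ1 : ∀ s, ∑ a, π s a = 1)
    (Vpi : S → ℝ) (hVpi : Tpol P r γ π Vpi = Vpi)
    (Vpi' : S → ℝ)
    (s₀ : S) :
    Vpi s₀ - Vpi' s₀
      = (1 / (1 - γ)) * ∑ s, occ P π γ s₀ s *
          ∑ a, π s a * ((r s a + γ * ∑ t, P s a t * Vpi' t) - Vpi' s) := by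
  set D : S → ℝ := fun s => Vpi s - Vpi' s
  set gap : ℕ → ℝ := fun t => ∑ s, muSeq P π s₀ t s * D s
  have hadv (s : S) : ∑ a, π s a * ((r s a + γ * ∑ t, P s a t * Vpi' t) - Vpi' s)
      = D s - γ * ∑ a, π s a * ∑ s', P s a s' * D s' := by
    rw [sum_mul_advantage_eq_Tpol_sub hπ1, ← Tpol_sub_Tpol, congrFun hVpi s]
    ring
  have hstep (t : ℕ) :
      γ ^ t * ∑ s, muSeq P π s₀ t s * (D s - γ * ∑ a, π s a * ∑ s', P s a s' * D s')
        = γ ^ t * gap t - γ ^ (t + 1) * gap (t + 1) := by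
    simp only [gap, mul_sub, sum_sub_distrib, mul_left_comm _ γ, ← mul_sum, sum_muSeq_succ_mul]
    ring
  have hgap : Summable fun t => γ ^ t * gap t :=
    summable_pow_mul_sum_muSeq_mul hP0 hP1 hπ0 hπ1 hγ0 hγ1 D
  simp only [hadv]
  rw [sum_occ_mul hP0 hP1 hπ0 hπ1 hγ0 hγ1, tsum_congr hstep,
    (hasSum_sub_succ hgap).tsum_eq, one_div, inv_mul_cancel_left₀ (by linarith)]
  simp [gap, D, sum_muSeq_zero_mul]

/-- Performance Difference Lemma:
`V^π(s₀) − V^{π'}(s₀) = (1/(1−γ)) Σ_s d^π_{s₀}(s) Σ_a π(a|s) A^{π'}(s,a)`. -/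
theorem stmt9 {S A : Type*} [Fintype S] [Fintype A] [Nonempty S] [Nonempty A]
    [DecidableEq S]
    (P : S → A → S → ℝ) (hP0 : ∀ s a s', 0 ≤ P s a s')
    (hP1 : ∀ s a, ∑ s', P s a s' = 1)
    (r : S → A → ℝ) (γ : ℝ) (hγ0 : 0 ≤ γ) (hγ1 : γ < 1)
    (π : S → A → ℝ) (hπ0 : ∀ s a, 0 ≤ π s a) (hπ1 : ∀ s, ∑ a, π s a = 1)
    (π' : S → A → ℝ) (hπ'0 : ∀ s a, 0 ≤ π' s a) (hπ'1 : ∀ s, ∑ a, π' s a = 1)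
    (Vpi : S → ℝ) (hVpi : Tpol P r γ π Vpi = Vpi)
    (Vpi' : S → ℝ) (hVpi' : Tpol P r γ π' Vpi' = Vpi')
    (s₀ : S) :
    Vpi s₀ - Vpi' s₀
      = (1 / (1 - γ)) * ∑ s, occ P π γ s₀ s *
          ∑ a, π s a * ((r s a + γ * ∑ t, P s a t * Vpi' t) - Vpi' s) :=
  stmt9_general P hP0 hP1 r γ hγ0 hγ1 π hπ0 hπ1 Vpi hVpi Vpi' s₀
end

section
/- Policy improvement: in a finite discounted MDP, let π and π' be stationary policies. If for every state s ∈ S, Σ_{a∈A} π'(a|s) Q^π(s,a) ≥ V^π(s), then V^{π'}(s) ≥ V^π(s) for every state s ∈ S. -/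
/-- Policy improvement: if for every state
`Σ_a π'(a|s) Q^π(s,a) ≥ V^π(s)` then `V^{π'} ≥ V^π` pointwise. -/
theorem stmt13 {S A : Type*} [Fintype S] [Fintype A] [Nonempty S] [Nonempty A]
    (P : S → A → S → ℝ) (hP0 : ∀ s a s', 0 ≤ P s a s')
    (hP1 : ∀ s a, ∑ s', P s a s' = 1)
    (r : S → A → ℝ) (γ : ℝ) (hγ0 : 0 ≤ γ) (hγ1 : γ < 1)
    (π : S → A → ℝ) (hπ0 : ∀ s a, 0 ≤ π s a) (hπ1 : ∀ s, ∑ a, π s a = 1)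
    (π' : S → A → ℝ) (hπ'0 : ∀ s a, 0 ≤ π' s a) (hπ'1 : ∀ s, ∑ a, π' s a = 1)
    (Vpi : S → ℝ) (hVpi : Tpol P r γ π Vpi = Vpi)
    (Vpi' : S → ℝ) (hVpi' : Tpol P r γ π' Vpi' = Vpi')
    (himp : ∀ s, Vpi s ≤ ∑ a, π' s a * (r s a + γ * ∑ t, P s a t * Vpi t)) :
    ∀ s, Vpi s ≤ Vpi' s := by
  obtain ⟨s0, -, hs0⟩ := Finset.exists_max_image Finset.univ
    (fun s => Vpi s - Vpi' s) ⟨Classical.arbitrary S, Finset.mem_univ _⟩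
  set M : ℝ := Vpi s0 - Vpi' s0 with hM
  have hMle : M ≤ γ * M := by
    have h1 : Vpi s0 ≤ ∑ a, π' s0 a * (r s0 a + γ * ∑ t, P s0 a t * Vpi t) := himp s0
    have h2 : Vpi' s0 = ∑ a, π' s0 a * (r s0 a + γ * ∑ t, P s0 a t * Vpi' t) := by
      conv_lhs => rw [← hVpi']
      rfl
    have key : M ≤ ∑ a, π' s0 a * (γ * ∑ t, P s0 a t * (Vpi t - Vpi' t)) := by
      have := sub_le_sub h1 (le_of_eq h2.symm)
      calc M ≤ (∑ a, π' s0 a * (r s0 a + γ * ∑ t, P s0 a t * Vpi t))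
              - ∑ a, π' s0 a * (r s0 a + γ * ∑ t, P s0 a t * Vpi' t) := this
        _ = ∑ a, π' s0 a * (γ * ∑ t, P s0 a t * (Vpi t - Vpi' t)) := by
            rw [← Finset.sum_sub_distrib]
            refine Finset.sum_congr rfl fun a _ => ?_
            simp only [mul_sub, Finset.sum_sub_distrib]
            ring

    have bound : ∀ a, π' s0 a * (γ * ∑ t, P s0 a t * (Vpi t - Vpi' t))
        ≤ π' s0 a * (γ * M) := by
      intro a
      refine mul_le_mul_of_nonneg_left (mul_le_mul_of_nonneg_left ?_ hγ0) (hπ'0 s0 a)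
      calc ∑ t, P s0 a t * (Vpi t - Vpi' t) ≤ ∑ t, P s0 a t * M := by
            refine Finset.sum_le_sum fun t _ => ?_
            exact mul_le_mul_of_nonneg_left (hs0 t (Finset.mem_univ t)) (hP0 s0 a t)
        _ = M := by rw [← Finset.sum_mul, hP1, one_mul]
    calc M ≤ ∑ a, π' s0 a * (γ * ∑ t, P s0 a t * (Vpi t - Vpi' t)) := key
      _ ≤ ∑ a, π' s0 a * (γ * M) := Finset.sum_le_sum fun a _ => bound a
      _ = γ * M := by rw [← Finset.sum_mul, hπ'1, one_mul]
  have hM0 : M ≤ 0 := by nlinarith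
  intro s
  have := hs0 s (Finset.mem_univ s)
  linarith
end

section
/- Simulation lemma: in a finite discounted MDP with |r(s,a)| ≤ R_max for all (s,a), let π and π' be stationary policies and set ε = max_{s∈S} TV(π(·|s), π'(·|s)). Then max_{s∈S} |V^π(s) − V^{π'}(s)| ≤ 2·R_max·ε/(1−γ)²; in particular the value gap between two policies is controlled by the worst-case total variation distance between their per-state action distributions. -/
/-- Simulation lemma: with `ε = max_s TV(π(·|s), π'(·|s))`,
`max_s |V^π(s) − V^{π'}(s)| ≤ 2·R_max·ε/(1−γ)²`. -/
theorem stmt14 {S A : Type*} [Fintype S] [Fintype A] [Nonempty S] [Nonempty A]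
    (P : S → A → S → ℝ) (hP0 : ∀ s a s', 0 ≤ P s a s')
    (hP1 : ∀ s a, ∑ s', P s a s' = 1)
    (r : S → A → ℝ) (γ : ℝ) (hγ0 : 0 ≤ γ) (hγ1 : γ < 1)
    (Rmax : ℝ) (hR : ∀ s a, |r s a| ≤ Rmax)
    (π : S → A → ℝ) (hπ0 : ∀ s a, 0 ≤ π s a) (hπ1 : ∀ s, ∑ a, π s a = 1)
    (π' : S → A → ℝ) (hπ'0 : ∀ s a, 0 ≤ π' s a) (hπ'1 : ∀ s, ∑ a, π' s a = 1)
    (Vpi : S → ℝ) (hVpi : Tpol P r γ π Vpi = Vpi)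
    (Vpi' : S → ℝ) (hVpi' : Tpol P r γ π' Vpi' = Vpi')
    (ε : ℝ)
    (hε : ε = Finset.univ.sup' Finset.univ_nonempty
      (fun s => (1 / 2) * ∑ a, |π s a - π' s a|)) :
    (Finset.univ.sup' Finset.univ_nonempty (fun s => |Vpi s - Vpi' s|))
      ≤ 2 * Rmax * ε / (1 - γ) ^ 2 := by
  set M := Finset.univ.sup' Finset.univ_nonempty (fun s => |Vpi s - Vpi' s|) with hM
  set N := Finset.univ.sup' Finset.univ_nonempty (fun s => |Vpi' s|) with hN
  have hMle : ∀ s : S, |Vpi s - Vpi' s| ≤ M := fun s =>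
    Finset.le_sup' (fun s => |Vpi s - Vpi' s|) (Finset.mem_univ s)
  have hNle : ∀ s : S, |Vpi' s| ≤ N := fun s =>
    Finset.le_sup' (fun s => |Vpi' s|) (Finset.mem_univ s)
  have hRmax : 0 ≤ Rmax :=
    le_trans (abs_nonneg _) (hR (Classical.arbitrary S) (Classical.arbitrary A))
  have h1γ : 0 < 1 - γ := by linarith
  -- bound the expected next value
  have hPV : ∀ s a, |∑ s', P s a s' * Vpi' s'| ≤ N := by
    intro s a
    calc |∑ s', P s a s' * Vpi' s'| ≤ ∑ s', |P s a s' * Vpi' s'| :=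
          Finset.abs_sum_le_sum_abs _ _
      _ ≤ ∑ s', P s a s' * N := by
          apply Finset.sum_le_sum; intro s' _
          rw [abs_mul, abs_of_nonneg (hP0 s a s')]
          exact mul_le_mul_of_nonneg_left (hNle s') (hP0 s a s')
      _ = N := by rw [← Finset.sum_mul, hP1, one_mul]
  -- bound N
  have hNbound : N * (1 - γ) ≤ Rmax := by
    have key : ∀ s : S, |Vpi' s| ≤ Rmax + γ * N := by
      intro s
      have e := congrFun hVpi' s
      rw [← e]
      show |∑ a, π' s a * (r s a + γ * ∑ s', P s a s' * Vpi' s')| ≤ _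
      calc |∑ a, π' s a * (r s a + γ * ∑ s', P s a s' * Vpi' s')|
          ≤ ∑ a, |π' s a * (r s a + γ * ∑ s', P s a s' * Vpi' s')| :=
            Finset.abs_sum_le_sum_abs _ _
        _ ≤ ∑ a, π' s a * (Rmax + γ * N) := by
            apply Finset.sum_le_sum; intro a _
            rw [abs_mul, abs_of_nonneg (hπ'0 s a)]
            apply mul_le_mul_of_nonneg_left _ (hπ'0 s a)
            calc |r s a + γ * ∑ s', P s a s' * Vpi' s'|
                ≤ |r s a| + |γ * ∑ s', P s a s' * Vpi' s'| := abs_add_le _ _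
              _ ≤ Rmax + γ * N := by
                  have : |γ * ∑ s', P s a s' * Vpi' s'| ≤ γ * N := by
                    rw [abs_mul, abs_of_nonneg hγ0]
                    exact mul_le_mul_of_nonneg_left (hPV s a) hγ0
                  linarith [hR s a]
        _ = Rmax + γ * N := by rw [← Finset.sum_mul, hπ'1, one_mul]
    have hNkey : N ≤ Rmax + γ * N := by
      apply Finset.sup'_le; intro s _; exact key s
    nlinarith
  -- TV bound
  have hεbound : ∀ s : S, ∑ a, |π s a - π' s a| ≤ 2 * ε := by
    intro s
    have h : (1 / 2 : ℝ) * ∑ a, |π s a - π' s a| ≤ ε := by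
      rw [hε]
      exact Finset.le_sup' (fun s => (1 / 2 : ℝ) * ∑ a, |π s a - π' s a|)
        (Finset.mem_univ s)
    linarith
  have hε0 : 0 ≤ ε := by
    rw [hε]
    refine le_trans ?_ (Finset.le_sup' (fun s => (1 / 2 : ℝ) * ∑ a, |π s a - π' s a|)
      (Finset.mem_univ (Classical.arbitrary S)))
    positivity
  have hN0 : 0 ≤ N := le_trans (abs_nonneg _) (hNle (Classical.arbitrary S))
  -- main pointwise bound
  have hmain : ∀ s : S, |Vpi s - Vpi' s| ≤ γ * M + 2 * ε * (Rmax + γ * N) := by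
    intro s
    have e1 := congrFun hVpi s
    have e2 := congrFun hVpi' s
    rw [← e1, ← e2]
    show |(∑ a, π s a * (r s a + γ * ∑ s', P s a s' * Vpi s'))
        - ∑ a, π' s a * (r s a + γ * ∑ s', P s a s' * Vpi' s')| ≤ _
    have decomp : (∑ a, π s a * (r s a + γ * ∑ s', P s a s' * Vpi s'))
        - (∑ a, π' s a * (r s a + γ * ∑ s', P s a s' * Vpi' s'))
        = (∑ a, π s a * (γ * ∑ s', P s a s' * (Vpi s' - Vpi' s')))
          + (∑ a, (π s a - π' s a) * (r s a + γ * ∑ s', P s a s' * Vpi' s')) := by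
      rw [← Finset.sum_add_distrib, ← Finset.sum_sub_distrib]
      apply Finset.sum_congr rfl
      intro a _
      have h3 : ∑ s', P s a s' * (Vpi s' - Vpi' s')
          = (∑ s', P s a s' * Vpi s') - ∑ s', P s a s' * Vpi' s' := by
        rw [← Finset.sum_sub_distrib]; apply Finset.sum_congr rfl; intros; ring
      rw [h3]; ring
    rw [decomp]
    have hfirst : |∑ a, π s a * (γ * ∑ s', P s a s' * (Vpi s' - Vpi' s'))| ≤ γ * M := by
      calc |∑ a, π s a * (γ * ∑ s', P s a s' * (Vpi s' - Vpi' s'))|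
          ≤ ∑ a, |π s a * (γ * ∑ s', P s a s' * (Vpi s' - Vpi' s'))| :=
            Finset.abs_sum_le_sum_abs _ _
        _ ≤ ∑ a, π s a * (γ * M) := by
            apply Finset.sum_le_sum; intro a _
            rw [abs_mul, abs_of_nonneg (hπ0 s a)]
            apply mul_le_mul_of_nonneg_left _ (hπ0 s a)
            rw [abs_mul, abs_of_nonneg hγ0]
            apply mul_le_mul_of_nonneg_left _ hγ0
            calc |∑ s', P s a s' * (Vpi s' - Vpi' s')|
                ≤ ∑ s', |P s a s' * (Vpi s' - Vpi' s')| := Finset.abs_sum_le_sum_abs _ _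
              _ ≤ ∑ s', P s a s' * M := by
                  apply Finset.sum_le_sum; intro s' _
                  rw [abs_mul, abs_of_nonneg (hP0 s a s')]
                  exact mul_le_mul_of_nonneg_left (hMle s') (hP0 s a s')
              _ = M := by rw [← Finset.sum_mul, hP1, one_mul]
        _ = γ * M := by rw [← Finset.sum_mul, hπ1, one_mul]
    have hsecond : |∑ a, (π s a - π' s a) * (r s a + γ * ∑ s', P s a s' * Vpi' s')|
        ≤ 2 * ε * (Rmax + γ * N) := by
      calc |∑ a, (π s a - π' s a) * (r s a + γ * ∑ s', P s a s' * Vpi' s')|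
          ≤ ∑ a, |(π s a - π' s a) * (r s a + γ * ∑ s', P s a s' * Vpi' s')| :=
            Finset.abs_sum_le_sum_abs _ _
        _ ≤ ∑ a, |π s a - π' s a| * (Rmax + γ * N) := by
            apply Finset.sum_le_sum; intro a _
            rw [abs_mul]
            apply mul_le_mul_of_nonneg_left _ (abs_nonneg _)
            calc |r s a + γ * ∑ s', P s a s' * Vpi' s'|
                ≤ |r s a| + |γ * ∑ s', P s a s' * Vpi' s'| := abs_add_le _ _
              _ ≤ Rmax + γ * N := by
                  have : |γ * ∑ s', P s a s' * Vpi' s'| ≤ γ * N := by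
                    rw [abs_mul, abs_of_nonneg hγ0]
                    exact mul_le_mul_of_nonneg_left (hPV s a) hγ0
                  linarith [hR s a]
        _ = (∑ a, |π s a - π' s a|) * (Rmax + γ * N) := by rw [Finset.sum_mul]
        _ ≤ 2 * ε * (Rmax + γ * N) := by
            apply mul_le_mul_of_nonneg_right (hεbound s)
            positivity
    calc |(∑ a, π s a * (γ * ∑ s', P s a s' * (Vpi s' - Vpi' s')))
          + ∑ a, (π s a - π' s a) * (r s a + γ * ∑ s', P s a s' * Vpi' s')|
        ≤ |∑ a, π s a * (γ * ∑ s', P s a s' * (Vpi s' - Vpi' s'))|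
          + |∑ a, (π s a - π' s a) * (r s a + γ * ∑ s', P s a s' * Vpi' s')| := abs_add_le _ _
      _ ≤ γ * M + 2 * ε * (Rmax + γ * N) := add_le_add hfirst hsecond
  have hMkey : M ≤ γ * M + 2 * ε * (Rmax + γ * N) := by
    apply Finset.sup'_le; intro s _; exact hmain s
  rw [le_div_iff₀ (by positivity)]
  have h2 : M * (1 - γ) ≤ 2 * ε * (Rmax + γ * N) := by nlinarith
  nlinarith [mul_le_mul_of_nonneg_right h2 h1γ.le,
    mul_le_mul_of_nonneg_left hNbound (show (0:ℝ) ≤ 2 * ε * γ by positivity),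
    mul_nonneg hε0 hRmax]
end

section
/- KL-controlled suboptimality bound: in a finite discounted MDP with |r(s,a)| ≤ R_max for all (s,a), let π and π' be stationary policies such that π'(a|s) > 0 for all (s,a), and set Δ = max_{s∈S} D_KL(π(·|s) ‖ π'(·|s)). Then max_{s∈S} |V^π(s) − V^{π'}(s)| ≤ (2·R_max/(1−γ)²)·√(Δ/2); in particular, as the worst-case per-state KL divergence between the two policies tends to 0, the value gap between them tends to 0. -/
section Pinsker

open Real Set InformationTheory

lemma monotoneOn_add_one_mul_log_sub :
    MonotoneOn (fun t : ℝ => (t + 1) * log t - 2 * (t - 1)) (Ioi 0) := by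
  refine monotoneOn_of_hasDerivWithinAt_nonneg (f' := fun t => log t + t⁻¹ - 1) (convex_Ioi 0)
    (fun t ht => ?_) (fun t ht => ?_) (fun t ht => ?_)
  · have ht : t ≠ 0 := ht.ne'
    fun_prop (disch := assumption)
  · rw [interior_Ioi] at ht ⊢
    replace ht : 0 < t := ht
    have := ((((hasDerivAt_id t).add_const 1).mul (hasDerivAt_log ht.ne')).sub
      (((hasDerivAt_id t).sub_const 1).const_mul 2)).hasDerivWithinAt (s := Ioi 0)
    refine this.congr_deriv ?_
    simp only [id]
    field_simp
    ring
  · rw [interior_Ioi] at ht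
    linarith [one_sub_inv_le_log_of_pos ht]

lemma three_mul_sq_sub_one_le_klFun {t : ℝ} (ht : 0 ≤ t) :
    3 * (t - 1) ^ 2 ≤ 2 * (t + 2) * klFun t := by
  have hderiv : ∀ t : ℝ, t ≠ 0 → HasDerivAt (fun t => 2 * (t + 2) * klFun t - 3 * (t - 1) ^ 2)
      (4 * ((t + 1) * log t - 2 * (t - 1))) t := fun t ht =>
    ((((hasDerivAt_id t).add_const 2).const_mul 2).mul (hasDerivAt_klFun ht)).sub
      ((((hasDerivAt_id t).sub_const 1).pow 2).const_mul 3)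
      |>.congr_deriv (by simp only [klFun_apply, id]; ring)
  have hψ := monotoneOn_add_one_mul_log_sub
  have hmin : IsMinOn (fun t => 2 * (t + 2) * klFun t - 3 * (t - 1) ^ 2) (Ici 0) 1 := by
    refine isMinOn_Ici_of_deriv (by fun_prop) (by fun_prop)
      (fun t ht => (hderiv t ht.1.ne').differentiableAt.differentiableWithinAt)
      (fun t ht => (hderiv t (by linarith [ht.out])).differentiableAt.differentiableWithinAt)
      (fun t ht => ?_) (fun t ht => ?_)
    · rw [(hderiv t ht.1.ne').deriv]
      have := hψ ht.1 (mem_Ioi.2 one_pos) ht.2.le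
      simp only [log_one] at this
      linarith
    · have ht0 : (0 : ℝ) < t := by linarith [ht.out]
      rw [(hderiv t ht0.ne').deriv]
      have := hψ (mem_Ioi.2 one_pos) ht0 ht.out.le
      simp only [log_one] at this
      linarith
  have := hmin (mem_Ici.2 ht)
  simp only [mem_ofPred_eq, klFun_one] at this
  linarith

lemma mul_klFun_div {p q : ℝ} (hq : q ≠ 0) : q * klFun (p / q) = p * log (p / q) + q - p := by
  rw [klFun_apply]
  field_simp

lemma three_mul_sub_sq_le_mul_log_div {p q : ℝ} (hp : 0 ≤ p) (hq : 0 < q) :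
    3 * (p - q) ^ 2 ≤ 2 * (p + 2 * q) * (p * log (p / q) + q - p) := by
  have h := mul_le_mul_of_nonneg_left (three_mul_sq_sub_one_le_klFun (div_nonneg hp hq.le))
    (sq_nonneg q)
  calc 3 * (p - q) ^ 2 = q ^ 2 * (3 * (p / q - 1) ^ 2) := by field_simp
    _ ≤ q ^ 2 * (2 * (p / q + 2) * klFun (p / q)) := h
    _ = 2 * (p + 2 * q) * (q * klFun (p / q)) := by field_simp
    _ = 2 * (p + 2 * q) * (p * log (p / q) + q - p) := by rw [mul_klFun_div hq.ne']

theorem sq_sum_abs_sub_le_two_mul_sum_mul_log_div {ι : Type*} [Fintype ι] {p q : ι → ℝ}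
    (hp0 : ∀ i, 0 ≤ p i) (hq0 : ∀ i, 0 < q i) (hp1 : ∑ i, p i = 1) (hq1 : ∑ i, q i = 1) :
    (∑ i, |p i - q i|) ^ 2 ≤ 2 * ∑ i, p i * log (p i / q i) := by
  set g : ι → ℝ := fun i => 2 * (p i + 2 * q i) / 3
  have hg : ∀ i, 0 < g i := fun i => by have := hp0 i; have := hq0 i; positivity
  have hg_sum : ∑ i, g i = 2 := by
    simp only [g, ← Finset.sum_div, ← Finset.mul_sum, Finset.sum_add_distrib, hp1, hq1]
    norm_num
  have hterm : ∀ i, |p i - q i| ^ 2 / g i ≤ p i * log (p i / q i) + q i - p i := fun i => by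
    rw [div_le_iff₀ (hg i), sq_abs]
    simp only [g]
    linarith [three_mul_sub_sq_le_mul_log_div (hp0 i) (hq0 i)]
  calc (∑ i, |p i - q i|) ^ 2 = 2 * ((∑ i, |p i - q i|) ^ 2 / ∑ i, g i) := by
        rw [hg_sum]; ring
    _ ≤ 2 * ∑ i, |p i - q i| ^ 2 / g i := by
        gcongr; exact Finset.sq_sum_div_le_sum_sq_div _ _ fun i _ => hg i
    _ ≤ 2 * ∑ i, (p i * log (p i / q i) + q i - p i) := by gcongr with i; exact hterm i
    _ = 2 * ∑ i, p i * log (p i / q i) := by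
        rw [Finset.sum_sub_distrib, Finset.sum_add_distrib, hp1, hq1]; ring

end Pinsker

lemma abs_sum_mul_le_sum_abs_mul {ι : Type*} [Fintype ι] {w f : ι → ℝ} {M : ℝ}
    (hf : ∀ i, |f i| ≤ M) : |∑ i, w i * f i| ≤ (∑ i, |w i|) * M := by
  calc |∑ i, w i * f i| ≤ ∑ i, |w i| * |f i| := by
        simpa only [abs_mul] using Finset.abs_sum_le_sum_abs (fun i => w i * f i) Finset.univ
    _ ≤ ∑ i, |w i| * M := by gcongr with i; exact hf i
    _ = (∑ i, |w i|) * M := (Finset.sum_mul ..).symm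

lemma abs_sum_mul_le_of_sum_eq_one {ι : Type*} [Fintype ι] {w f : ι → ℝ} {M : ℝ}
    (hw0 : ∀ i, 0 ≤ w i) (hw1 : ∑ i, w i = 1) (hf : ∀ i, |f i| ≤ M) :
    |∑ i, w i * f i| ≤ M := by
  simpa only [abs_of_nonneg (hw0 _), hw1, one_mul] using abs_sum_mul_le_sum_abs_mul (w := w) hf

lemma sup'_univ_abs_eq_norm {ι : Type*} [Fintype ι] [Nonempty ι] (f : ι → ℝ) :
    Finset.univ.sup' Finset.univ_nonempty (fun i => |f i|) = ‖f‖ :=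
  le_antisymm (Finset.sup'_le _ _ fun i _ => norm_le_pi_norm f i)
    ((pi_norm_le_iff_of_nonempty _).2 fun i => Finset.le_sup' (fun i => |f i|) (Finset.mem_univ i))

section MDP

variable {S A : Type*} [Fintype S] {P : S → A → S → ℝ} {r : S → A → ℝ} {γ Rmax : ℝ}

def bellmanQ (P : S → A → S → ℝ) (r : S → A → ℝ) (γ : ℝ) (V : S → ℝ) (s : S) (a : A) : ℝ :=
  r s a + γ * ∑ s', P s a s' * V s'

lemma abs_bellmanQ_le (hP0 : ∀ s a s', 0 ≤ P s a s') (hP1 : ∀ s a, ∑ s', P s a s' = 1)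
    (hγ0 : 0 ≤ γ) (hR : ∀ s a, |r s a| ≤ Rmax) (V : S → ℝ) (s : S) (a : A) :
    |bellmanQ P r γ V s a| ≤ Rmax + γ * ‖V‖ := by
  have hPV : |∑ s', P s a s' * V s'| ≤ ‖V‖ :=
    abs_sum_mul_le_of_sum_eq_one (hP0 s a) (hP1 s a) fun s' => norm_le_pi_norm V s'
  calc |bellmanQ P r γ V s a| ≤ |r s a| + |γ * ∑ s', P s a s' * V s'| := abs_add_le _ _
    _ = |r s a| + γ * |∑ s', P s a s' * V s'| := by rw [abs_mul, abs_of_nonneg hγ0]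
    _ ≤ Rmax + γ * ‖V‖ := by gcongr; exact hR s a

lemma abs_bellmanQ_sub_le (hP0 : ∀ s a s', 0 ≤ P s a s') (hP1 : ∀ s a, ∑ s', P s a s' = 1)
    (hγ0 : 0 ≤ γ) (V V' : S → ℝ) (s : S) (a : A) :
    |bellmanQ P r γ V s a - bellmanQ P r γ V' s a| ≤ γ * ‖V - V'‖ := by
  have hPV : |∑ s', P s a s' * (V - V') s'| ≤ ‖V - V'‖ :=
    abs_sum_mul_le_of_sum_eq_one (hP0 s a) (hP1 s a) fun s' => norm_le_pi_norm (V - V') s'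
  have h : bellmanQ P r γ V s a - bellmanQ P r γ V' s a = γ * ∑ s', P s a s' * (V - V') s' := by
    simp only [bellmanQ, Pi.sub_apply, mul_sub, Finset.sum_sub_distrib]
    ring
  rw [h, abs_mul, abs_of_nonneg hγ0]
  gcongr

variable [Fintype A]

lemma Tpol_apply (π : S → A → ℝ) (V : S → ℝ) (s : S) :
    Tpol P r γ π V s = ∑ a, π s a * bellmanQ P r γ V s a := rfl

lemma norm_le_of_Tpol_eq_self [Nonempty S] (hP0 : ∀ s a s', 0 ≤ P s a s')
    (hP1 : ∀ s a, ∑ s', P s a s' = 1) (hγ0 : 0 ≤ γ) (hγ1 : γ < 1) (hR : ∀ s a, |r s a| ≤ Rmax)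
    {π : S → A → ℝ} (hπ0 : ∀ s a, 0 ≤ π s a) (hπ1 : ∀ s, ∑ a, π s a = 1)
    {V : S → ℝ} (hV : Tpol P r γ π V = V) : ‖V‖ ≤ Rmax / (1 - γ) := by
  have hs : ∀ s, |V s| ≤ Rmax + γ * ‖V‖ := fun s => by
    rw [← congrFun hV s, Tpol_apply]
    exact abs_sum_mul_le_of_sum_eq_one (hπ0 s) (hπ1 s) (abs_bellmanQ_le hP0 hP1 hγ0 hR V s)
  have hV_le : ‖V‖ ≤ Rmax + γ * ‖V‖ := (pi_norm_le_iff_of_nonempty _).2 hs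
  rw [le_div_iff₀ (by linarith)]
  linarith

lemma abs_Tpol_sub_Tpol_le (hP0 : ∀ s a s', 0 ≤ P s a s') (hP1 : ∀ s a, ∑ s', P s a s' = 1)
    (hγ0 : 0 ≤ γ) (hR : ∀ s a, |r s a| ≤ Rmax)
    {π : S → A → ℝ} (hπ0 : ∀ s a, 0 ≤ π s a) (hπ1 : ∀ s, ∑ a, π s a = 1) (π' : S → A → ℝ)
    (V V' : S → ℝ) (s : S) :
    |Tpol P r γ π V s - Tpol P r γ π' V' s|
      ≤ γ * ‖V - V'‖ + (∑ a, |π s a - π' s a|) * (Rmax + γ * ‖V'‖) := by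
  have h : Tpol P r γ π V s - Tpol P r γ π' V' s
      = ∑ a, π s a * (bellmanQ P r γ V s a - bellmanQ P r γ V' s a)
        + ∑ a, (π s a - π' s a) * bellmanQ P r γ V' s a := by
    simp only [Tpol_apply, mul_sub, sub_mul, Finset.sum_sub_distrib]
    ring
  rw [h]
  exact (abs_add_le _ _).trans (add_le_add
    (abs_sum_mul_le_of_sum_eq_one (hπ0 s) (hπ1 s) (abs_bellmanQ_sub_le hP0 hP1 hγ0 V V' s))
    (abs_sum_mul_le_sum_abs_mul (abs_bellmanQ_le hP0 hP1 hγ0 hR V' s)))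

theorem norm_sub_le_of_Tpol_eq_self [Nonempty S] (hP0 : ∀ s a s', 0 ≤ P s a s')
    (hP1 : ∀ s a, ∑ s', P s a s' = 1) (hγ0 : 0 ≤ γ) (hγ1 : γ < 1) (hR : ∀ s a, |r s a| ≤ Rmax)
    {π π' : S → A → ℝ} (hπ0 : ∀ s a, 0 ≤ π s a) (hπ1 : ∀ s, ∑ a, π s a = 1)
    (hπ'0 : ∀ s a, 0 ≤ π' s a) (hπ'1 : ∀ s, ∑ a, π' s a = 1)
    {V V' : S → ℝ} (hV : Tpol P r γ π V = V) (hV' : Tpol P r γ π' V' = V')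
    {ε : ℝ} (hε : ∀ s, ∑ a, |π s a - π' s a| ≤ ε) :
    ‖V - V'‖ ≤ Rmax / (1 - γ) ^ 2 * ε := by
  have h1γ : 0 < 1 - γ := by linarith
  have hV'_le := norm_le_of_Tpol_eq_self hP0 hP1 hγ0 hγ1 hR hπ'0 hπ'1 hV'
  have hQ : Rmax + γ * ‖V'‖ ≤ Rmax / (1 - γ) := calc
    Rmax + γ * ‖V'‖ ≤ Rmax + γ * (Rmax / (1 - γ)) := by gcongr
    _ = Rmax / (1 - γ) := by field_simp; ring
  have hs : ∀ s, ‖(V - V') s‖ ≤ γ * ‖V - V'‖ + ε * (Rmax / (1 - γ)) := fun s => by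
    rw [Pi.sub_apply, Real.norm_eq_abs, ← congrFun hV s, ← congrFun hV' s]
    refine (abs_Tpol_sub_Tpol_le hP0 hP1 hγ0 hR hπ0 hπ1 π' V V' s).trans ?_
    exact add_le_add le_rfl
      (mul_le_mul_of_nonneg (hε s) hQ (by positivity) ((norm_nonneg _).trans hV'_le))
  have hD := (pi_norm_le_iff_of_nonempty _).2 hs
  rw [show Rmax / (1 - γ) ^ 2 * ε = ε * (Rmax / (1 - γ)) / (1 - γ) by field_simp,
    le_div_iff₀ h1γ]
  linarith

end MDP

theorem stmt15_general {S A : Type*} [Fintype S] [Fintype A] [Nonempty S]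
    (P : S → A → S → ℝ) (hP0 : ∀ s a s', 0 ≤ P s a s')
    (hP1 : ∀ s a, ∑ s', P s a s' = 1)
    (r : S → A → ℝ) (γ : ℝ) (hγ0 : 0 ≤ γ) (hγ1 : γ < 1)
    (Rmax : ℝ) (hR : ∀ s a, |r s a| ≤ Rmax)
    (π : S → A → ℝ) (hπ0 : ∀ s a, 0 ≤ π s a) (hπ1 : ∀ s, ∑ a, π s a = 1)
    (π' : S → A → ℝ) (hπ'0 : ∀ s a, 0 < π' s a) (hπ'1 : ∀ s, ∑ a, π' s a = 1)
    (Vpi : S → ℝ) (hVpi : Tpol P r γ π Vpi = Vpi)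
    (Vpi' : S → ℝ) (hVpi' : Tpol P r γ π' Vpi' = Vpi')
    (Δ : ℝ)
    (hΔ : Δ = Finset.univ.sup' Finset.univ_nonempty
      (fun s => ∑ a, π s a * Real.log (π s a / π' s a))) :
    (Finset.univ.sup' Finset.univ_nonempty (fun s => |Vpi s - Vpi' s|))
      ≤ (2 * Rmax / (1 - γ) ^ 2) * Real.sqrt (Δ / 2) := by
  have hL1 : ∀ s, ∑ a, |π s a - π' s a| ≤ 2 * Real.sqrt (Δ / 2) := fun s => by
    have hpinsker := sq_sum_abs_sub_le_two_mul_sum_mul_log_div (hπ0 s) (hπ'0 s) (hπ1 s) (hπ'1 s)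
    have hKL : ∑ a, π s a * Real.log (π s a / π' s a) ≤ Δ :=
      hΔ ▸ Finset.le_sup' (fun s => ∑ a, π s a * Real.log (π s a / π' s a)) (Finset.mem_univ s)
    have := Real.le_sqrt_of_sq_le (x := (∑ a, |π s a - π' s a|) / 2) (y := Δ / 2)
      (by rw [div_pow]; linarith)
    linarith
  rw [sup'_univ_abs_eq_norm]
  calc ‖Vpi - Vpi'‖ ≤ Rmax / (1 - γ) ^ 2 * (2 * Real.sqrt (Δ / 2)) :=
        norm_sub_le_of_Tpol_eq_self hP0 hP1 hγ0 hγ1 hR hπ0 hπ1 (fun s a => (hπ'0 s a).le) hπ'1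
          hVpi hVpi' hL1
    _ = 2 * Rmax / (1 - γ) ^ 2 * Real.sqrt (Δ / 2) := by ring

/-- KL-controlled suboptimality bound: with
`Δ = max_s D_KL(π(·|s) ‖ π'(·|s))`,
`max_s |V^π(s) − V^{π'}(s)| ≤ (2·R_max/(1−γ)²)·√(Δ/2)`. -/
theorem stmt15 {S A : Type*} [Fintype S] [Fintype A] [Nonempty S] [Nonempty A]
    (P : S → A → S → ℝ) (hP0 : ∀ s a s', 0 ≤ P s a s')
    (hP1 : ∀ s a, ∑ s', P s a s' = 1)
    (r : S → A → ℝ) (γ : ℝ) (hγ0 : 0 ≤ γ) (hγ1 : γ < 1)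
    (Rmax : ℝ) (hR : ∀ s a, |r s a| ≤ Rmax)
    (π : S → A → ℝ) (hπ0 : ∀ s a, 0 ≤ π s a) (hπ1 : ∀ s, ∑ a, π s a = 1)
    (π' : S → A → ℝ) (hπ'0 : ∀ s a, 0 < π' s a) (hπ'1 : ∀ s, ∑ a, π' s a = 1)
    (Vpi : S → ℝ) (hVpi : Tpol P r γ π Vpi = Vpi)
    (Vpi' : S → ℝ) (hVpi' : Tpol P r γ π' Vpi' = Vpi')
    (Δ : ℝ)
    (hΔ : Δ = Finset.univ.sup' Finset.univ_nonempty
      (fun s => ∑ a, π s a * Real.log (π s a / π' s a))) :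
    (Finset.univ.sup' Finset.univ_nonempty (fun s => |Vpi s - Vpi' s|))
      ≤ (2 * Rmax / (1 - γ) ^ 2) * Real.sqrt (Δ / 2) :=
  stmt15_general P hP0 hP1 r γ hγ0 hγ1 Rmax hR π hπ0 hπ1 π' hπ'0 hπ'1 Vpi hVpi Vpi' hVpi' Δ hΔ
end

section
/- Soft Bellman contraction: in a finite discounted MDP, for β > 0 define the soft Bellman operator (T_soft V)(s) = β·log Σ_{a∈A} exp( ( r(s,a) + γ Σ_{s'∈S} P(s'|s,a) V(s') ) / β ). Then T_soft is a Lipschitz map with constant γ on functions V : S → ℝ with the supremum norm, and since 0 ≤ γ < 1 it has a unique fixed point V_soft : S → ℝ satisfying the soft Bellman optimality equation Q(s,a) = r(s,a) + γ Σ_{s'} P(s'|s,a) V_soft(s') with V_soft(s) = β·log Σ_a exp(Q(s,a)/β). -/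
/-- The soft Bellman operator
`(T_soft V)(s) = β·log Σ_a exp((r(s,a) + γ Σ_{s'} P(s'|s,a) V(s'))/β)`. -/
noncomputable def Tsoft {S A : Type*} [Fintype S] [Fintype A]
    (P : S → A → S → ℝ) (r : S → A → ℝ) (γ β : ℝ) (V : S → ℝ) : S → ℝ :=
  fun s => β * Real.log (∑ a, Real.exp ((r s a + γ * ∑ s', P s a s' * V s') / β))

/-!
`T_soft V (s)` is the log-sum-exp "soft maximum" at temperature `β` of the action values
`Q_V(s, ·) = r(s, ·) + γ E_{P(·|s,·)} V`. The soft maximum is monotone and commutes with adding a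
constant, hence is 1-Lipschitz for the sup norm; taking expectations is 1-Lipschitz too, so
`T_soft` is `γ`-Lipschitz and Banach's fixed point theorem applies on the complete space `S → ℝ`.
-/

open Finset Real

section SoftMax

variable {A : Type*} [Fintype A]

noncomputable def softMax (β : ℝ) (x : A → ℝ) : ℝ :=
  β * log (∑ a, exp (x a / β))

variable [Nonempty A] {β : ℝ}

theorem softMax_mono (hβ : 0 ≤ β) {x y : A → ℝ} (hxy : x ≤ y) :
    softMax β x ≤ softMax β y := by
  unfold softMax
  gcongr with a
  exact hxy a

theorem softMax_add_const (hβ : β ≠ 0) (x : A → ℝ) (c : ℝ) :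
    softMax β (fun a => x a + c) = softMax β x + c := by
  have hsum : ∑ a, exp ((x a + c) / β) = exp (c / β) * ∑ a, exp (x a / β) := by
    rw [mul_sum]
    exact sum_congr rfl fun a _ => by rw [← exp_add, add_div, add_comm]
  have hpos : 0 < ∑ a, exp (x a / β) := sum_pos (fun a _ => exp_pos _) univ_nonempty
  rw [softMax, softMax, hsum, log_mul (exp_ne_zero _) hpos.ne', log_exp]
  field_simp
  ring

theorem softMax_le_add_of_le_add (hβ : 0 < β) {x y : A → ℝ} {c : ℝ}
    (h : ∀ a, x a ≤ y a + c) : softMax β x ≤ softMax β y + c :=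
  softMax_add_const hβ.ne' y c ▸ softMax_mono hβ.le h

theorem abs_softMax_sub_le (hβ : 0 < β) {x y : A → ℝ} {M : ℝ}
    (h : ∀ a, |x a - y a| ≤ M) : |softMax β x - softMax β y| ≤ M := by
  simp only [abs_sub_le_iff, sub_le_iff_le_add'] at h ⊢
  exact ⟨softMax_le_add_of_le_add hβ fun a => (h a).1,
    softMax_le_add_of_le_add hβ fun a => (h a).2⟩

end SoftMax

theorem abs_sum_mul_sub_sum_mul_le {ι : Type*} {s : Finset ι} {p V W : ι → ℝ}
    (hp0 : ∀ i ∈ s, 0 ≤ p i) (hp1 : ∑ i ∈ s, p i = 1) {M : ℝ}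
    (hVW : ∀ i ∈ s, |V i - W i| ≤ M) :
    |∑ i ∈ s, p i * V i - ∑ i ∈ s, p i * W i| ≤ M :=
  calc |∑ i ∈ s, p i * V i - ∑ i ∈ s, p i * W i|
      = |∑ i ∈ s, p i * (V i - W i)| := by simp only [mul_sub, sum_sub_distrib]
    _ ≤ ∑ i ∈ s, p i * |V i - W i| := by
        refine (abs_sum_le_sum_abs _ _).trans (sum_le_sum fun i hi => ?_)
        rw [abs_mul, abs_of_nonneg (hp0 i hi)]
    _ ≤ ∑ i ∈ s, p i * M :=
        sum_le_sum fun i hi => mul_le_mul_of_nonneg_left (hVW i hi) (hp0 i hi)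
    _ = M := by rw [← sum_mul, hp1, one_mul]

section SoftBellman

variable {S A : Type*} [Fintype S] [Fintype A] [Nonempty A] {P : S → A → S → ℝ} {γ β : ℝ}

theorem abs_Tsoft_sub_le (hP0 : ∀ s a s', 0 ≤ P s a s') (hP1 : ∀ s a, ∑ s', P s a s' = 1)
    (r : S → A → ℝ) (hγ0 : 0 ≤ γ) (hβ : 0 < β) {V W : S → ℝ} {M : ℝ}
    (hVW : ∀ s', |V s' - W s'| ≤ M) (s : S) :
    |Tsoft P r γ β V s - Tsoft P r γ β W s| ≤ γ * M := by
  change |softMax β _ - softMax β _| ≤ γ * M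
  refine abs_softMax_sub_le hβ fun a => ?_
  rw [add_sub_add_left_eq_sub, ← mul_sub, abs_mul, abs_of_nonneg hγ0]
  exact mul_le_mul_of_nonneg_left
    (abs_sum_mul_sub_sum_mul_le (fun s' _ => hP0 s a s') (hP1 s a) fun s' _ => hVW s') hγ0

theorem lipschitzWith_Tsoft (hP0 : ∀ s a s', 0 ≤ P s a s') (hP1 : ∀ s a, ∑ s', P s a s' = 1)
    (r : S → A → ℝ) (hγ0 : 0 ≤ γ) (hβ : 0 < β) : LipschitzWith ⟨γ, hγ0⟩ (Tsoft P r γ β) := by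
  refine LipschitzWith.of_dist_le_mul fun V W => (dist_pi_le_iff (by positivity)).2 fun s => ?_
  rw [Real.dist_eq]
  exact abs_Tsoft_sub_le hP0 hP1 r hγ0 hβ
    (fun s' => by simpa only [Real.dist_eq] using dist_le_pi_dist V W s') s

end SoftBellman

/-- Soft Bellman contraction: `T_soft` is `γ`-Lipschitz in the
supremum norm, and since `0 ≤ γ < 1` it has a unique fixed point `V_soft`
satisfying the soft Bellman optimality equation
`V_soft(s) = β·log Σ_a exp(Q(s,a)/β)` with
`Q(s,a) = r(s,a) + γ Σ_{s'} P(s'|s,a) V_soft(s')`. -/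
theorem stmt17 {S A : Type*} [Fintype S] [Fintype A] [Nonempty S] [Nonempty A]
    (P : S → A → S → ℝ) (hP0 : ∀ s a s', 0 ≤ P s a s')
    (hP1 : ∀ s a, ∑ s', P s a s' = 1)
    (r : S → A → ℝ) (γ : ℝ) (hγ0 : 0 ≤ γ) (hγ1 : γ < 1)
    (β : ℝ) (hβ : 0 < β) :
    (∀ V W : S → ℝ,
        (Finset.univ.sup' Finset.univ_nonempty
          (fun s => |Tsoft P r γ β V s - Tsoft P r γ β W s|))
        ≤ γ * Finset.univ.sup' Finset.univ_nonempty (fun s => |V s - W s|))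
    ∧ (∃! V : S → ℝ, ∀ s,
        V s = β * Real.log
          (∑ a, Real.exp ((r s a + γ * ∑ s', P s a s' * V s') / β))) := by
  refine ⟨fun V W => sup'_le _ _ fun s _ => abs_Tsoft_sub_le hP0 hP1 r hγ0 hβ
    (fun s' => le_sup' (fun s => |V s - W s|) (mem_univ s')) s, ?_⟩
  have hT : ContractingWith ⟨γ, hγ0⟩ (Tsoft P r γ β) :=
    ⟨by exact_mod_cast hγ1, lipschitzWith_Tsoft hP0 hP1 r hγ0 hβ⟩
  refine ⟨hT.fixedPoint _, fun s => (congrFun hT.fixedPoint_isFixedPt s).symm, fun V hV => ?_⟩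
  exact hT.fixedPoint_unique (funext fun s => (hV s).symm)
end

section
/- Token-level soft optimality extends to sequence-level softmax: let Σ be a nonempty finite alphabet, L ≥ 1, β > 0, and for each j ∈ {1,…,L} let r_j : Σ^j → ℝ be a per-token reward. Define recursively V_L ≡ 0 on Σ^L; for j = L down to 1, Q_j : Σ^j → ℝ by Q_j(w·a) = r_j(w·a) + V_j(w·a) for w ∈ Σ^{j−1}, a ∈ Σ, and V_{j−1} : Σ^{j−1} → ℝ by V_{j−1}(w) = β·log Σ_{a∈Σ} exp(Q_j(w·a)/β). Let the token policy be π_j(a|w) = exp(Q_j(w·a)/β) / Σ_{a'∈Σ} exp(Q_j(w·a')/β). Then for every sequence (a₁,…,a_L) ∈ Σ^L, with R(a₁,…,a_L) = Σ_{j=1}^{L} r_j(a₁,…,a_j) and V₀ the value of the empty prefix: (i) Π_{j=1}^{L} π_j(a_j | a₁,…,a_{j−1}) = exp( (R(a₁,…,a_L) − V₀)/β ); and (ii) the induced sequence distribution is the softmax of the total return, Π_{j=1}^{L} π_j(a_j | a₁,…,a_{j−1}) = exp(R(a₁,…,a_L)/β) / Σ_{(b₁,…,b_L)∈Σ^L}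 exp(R(b₁,…,b_L)/β), equivalently V₀ = β·log Σ_{b∈Σ^L} exp(R(b)/β). -/
/-- Soft value of a prefix with `k` tokens remaining:
`Vrem β r 0 w = 0` and
`Vrem β r (k+1) w = β·log Σ_a exp((r(w·a) + Vrem β r k (w·a))/β)`.
If `w` has length `L − k` then this is the value `V_{L−k}(w)` of the recursion
`V_L ≡ 0`, `V_{j−1}(w) = β·log Σ_a exp(Q_j(w·a)/β)` with
`Q_j(w·a) = r(w·a) + V_j(w·a)`. -/
noncomputable def Vrem {σ : Type*} [Fintype σ]
    (β : ℝ) (reward : List σ → ℝ) : ℕ → List σ → ℝ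
  | 0, _ => 0
  | k + 1, w =>
      β * Real.log (∑ a, Real.exp ((reward (w ++ [a]) + Vrem β reward k (w ++ [a])) / β))

/-! The normaliser of the token policy at a prefix `w` is `exp (V(w) / β)`, so each policy factor
is `exp ((r_j + V_j - V_{j-1}) / β)` and the product over a sequence telescopes to
`exp ((R - V₀) / β)`, as `V_L = 0`. Unfolding the recursion, `exp (V(w) / β)` is the partition
function `Σ_s exp (return of s after w / β)` over all continuations `s`, because a sum over
sequences splits over the first token. At the empty prefix this is `Σ_y exp (R(y) / β)`. -/

open Finset Real

lemma List.take_ofFn_succ {α : Type*} {n : ℕ} (x : Fin n → α) (j : Fin n) :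
    (List.ofFn x).take (j.val + 1) = (List.ofFn x).take j.val ++ [x j] := by
  simp [List.take_add_one]

section SoftValue

variable {σ : Type*} [Fintype σ] [Nonempty σ] {β : ℝ} (reward : List σ → ℝ)

theorem exp_Vrem_succ_div (hβ : β ≠ 0) (k : ℕ) (w : List σ) :
    exp (Vrem β reward (k + 1) w / β)
      = ∑ a, exp ((reward (w ++ [a]) + Vrem β reward k (w ++ [a])) / β) := by
  rw [Vrem, mul_div_cancel_left₀ _ hβ, exp_log]
  exact sum_pos (fun a _ => exp_pos _) univ_nonempty

theorem softPolicy_eq_exp (hβ : β ≠ 0) (k : ℕ) (w : List σ) (a : σ) :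
    exp ((reward (w ++ [a]) + Vrem β reward k (w ++ [a])) / β)
        / ∑ b, exp ((reward (w ++ [b]) + Vrem β reward k (w ++ [b])) / β)
      = exp ((reward (w ++ [a]) + Vrem β reward k (w ++ [a]) - Vrem β reward (k + 1) w) / β) := by
  rw [← exp_Vrem_succ_div reward hβ, ← exp_sub, sub_div]

theorem exp_Vrem_div_eq_sum (hβ : β ≠ 0) (k : ℕ) (w : List σ) :
    exp (Vrem β reward k w / β)
      = ∑ s : Fin k → σ, exp ((∑ j : Fin k, reward (w ++ (List.ofFn s).take (j.val + 1))) / β) := by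
  induction k generalizing w with
  | zero => simp [Vrem]
  | succ k ih =>
    rw [exp_Vrem_succ_div reward hβ, ← (Fin.consEquiv fun _ : Fin (k + 1) => σ).sum_comp,
      Fintype.sum_prod_type]
    refine sum_congr rfl fun a _ => ?_
    rw [add_div, exp_add, ih, mul_sum]
    refine sum_congr rfl fun s _ => ?_
    rw [← exp_add, ← add_div]
    congr 2
    simp [Fin.consEquiv, List.ofFn_succ, Fin.sum_univ_succ]

theorem prod_softPolicy_eq_exp (hβ : β ≠ 0) (L : ℕ) (x : Fin L → σ) :
    ∏ j : Fin L,
        exp ((reward ((List.ofFn x).take (j.val + 1)) +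
            Vrem β reward (L - (j.val + 1)) ((List.ofFn x).take (j.val + 1))) / β) /
          ∑ a : σ, exp ((reward ((List.ofFn x).take j.val ++ [a]) +
            Vrem β reward (L - (j.val + 1)) ((List.ofFn x).take j.val ++ [a])) / β)
      = exp ((∑ j : Fin L, reward ((List.ofFn x).take (j.val + 1)) - Vrem β reward L []) / β) := by
  let g (m : ℕ) : ℝ := Vrem β reward (L - m) ((List.ofFn x).take m) / β
  calc _ = ∏ j : Fin L, exp (reward ((List.ofFn x).take (j.val + 1)) / β + (g (j + 1) - g j)) := by
        refine prod_congr rfl fun j _ => ?_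
        rw [List.take_ofFn_succ x j, softPolicy_eq_exp reward hβ,
          show L - (j + 1) + 1 = L - j by omega]
        simp only [g, List.take_ofFn_succ x j]
        ring_nf
    _ = exp (∑ j : Fin L, reward ((List.ofFn x).take (j.val + 1)) / β + (g L - g 0)) := by
        rw [← exp_sum, sum_add_distrib, Fin.sum_univ_eq_sum_range (fun i => g (i + 1) - g i),
          sum_range_sub]
    _ = _ := by
        simp only [g, Nat.sub_self, Vrem, List.take_zero, Nat.sub_zero]
        rw [zero_div, zero_sub, sub_div, sum_div, sub_eq_add_neg]

end SoftValue

theorem stmt19_general {σ : Type*} [Fintype σ] [Nonempty σ]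
    (L : ℕ) (β : ℝ) (hβ : 0 < β) (reward : List σ → ℝ) :
    (∀ x : Fin L → σ,
      ((∏ j : Fin L,
          Real.exp ((reward ((List.ofFn x).take (j.val + 1)) +
              Vrem β reward (L - (j.val + 1)) ((List.ofFn x).take (j.val + 1))) / β) /
            ∑ a : σ,
              Real.exp ((reward (((List.ofFn x).take j.val) ++ [a]) +
                Vrem β reward (L - (j.val + 1)) (((List.ofFn x).take j.val) ++ [a])) / β))
        = Real.exp (((∑ j : Fin L, reward ((List.ofFn x).take (j.val + 1))) -
            Vrem β reward L []) / β))
      ∧ ((∏ j : Fin L,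
          Real.exp ((reward ((List.ofFn x).take (j.val + 1)) +
              Vrem β reward (L - (j.val + 1)) ((List.ofFn x).take (j.val + 1))) / β) /
            ∑ a : σ,
              Real.exp ((reward (((List.ofFn x).take j.val) ++ [a]) +
                Vrem β reward (L - (j.val + 1)) (((List.ofFn x).take j.val) ++ [a])) / β))
        = Real.exp ((∑ j : Fin L, reward ((List.ofFn x).take (j.val + 1))) / β) /
            ∑ y : Fin L → σ,
              Real.exp ((∑ j : Fin L, reward ((List.ofFn y).take (j.val + 1))) / β)))
    ∧ Vrem β reward L []
        = β * Real.log (∑ y : Fin L → σ,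
            Real.exp ((∑ j : Fin L, reward ((List.ofFn y).take (j.val + 1))) / β)) := by
  have hpartition := exp_Vrem_div_eq_sum reward hβ.ne' L []
  simp only [List.nil_append] at hpartition
  refine ⟨fun x => ⟨prod_softPolicy_eq_exp reward hβ.ne' L x, ?_⟩, ?_⟩
  · rw [prod_softPolicy_eq_exp reward hβ.ne', sub_div, exp_sub, hpartition]
  · rw [← hpartition, log_exp, mul_div_cancel₀ _ hβ.ne']

/-- Token-level soft optimality extends to sequence-level softmax:
with token policy `π_j(a|w) = exp(Q_j(w·a)/β)/Σ_{a'} exp(Q_j(w·a')/β)`, for every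
sequence `x ∈ Σ^L`: (i) `Π_j π_j(x_j|x_{<j}) = exp((R(x) − V₀)/β)`; (ii) the
induced sequence distribution is the softmax of the total return `R`; and
equivalently `V₀ = β·log Σ_{y∈Σ^L} exp(R(y)/β)`. -/
theorem stmt19 {σ : Type*} [Fintype σ] [Nonempty σ]
    (L : ℕ) (hL : 1 ≤ L) (β : ℝ) (hβ : 0 < β) (reward : List σ → ℝ) :
    (∀ x : Fin L → σ,
      ((∏ j : Fin L,
          Real.exp ((reward ((List.ofFn x).take (j.val + 1)) +
              Vrem β reward (L - (j.val + 1)) ((List.ofFn x).take (j.val + 1))) / β) /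
            ∑ a : σ,
              Real.exp ((reward (((List.ofFn x).take j.val) ++ [a]) +
                Vrem β reward (L - (j.val + 1)) (((List.ofFn x).take j.val) ++ [a])) / β))
        = Real.exp (((∑ j : Fin L, reward ((List.ofFn x).take (j.val + 1))) -
            Vrem β reward L []) / β))
      ∧ ((∏ j : Fin L,
          Real.exp ((reward ((List.ofFn x).take (j.val + 1)) +
              Vrem β reward (L - (j.val + 1)) ((List.ofFn x).take (j.val + 1))) / β) /
            ∑ a : σ,
              Real.exp ((reward (((List.ofFn x).take j.val) ++ [a]) +
                Vrem β reward (L - (j.val + 1)) (((List.ofFn x).take j.val) ++ [a])) / β))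
        = Real.exp ((∑ j : Fin L, reward ((List.ofFn x).take (j.val + 1))) / β) /
            ∑ y : Fin L → σ,
              Real.exp ((∑ j : Fin L, reward ((List.ofFn y).take (j.val + 1))) / β)))
    ∧ Vrem β reward L []
        = β * Real.log (∑ y : Fin L → σ,
            Real.exp ((∑ j : Fin L, reward ((List.ofFn y).take (j.val + 1))) / β)) :=
  stmt19_general L β hβ reward
end
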